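/- Conversely, if u ∈ R^n_{>0} and v ∈ R^m_{>0} satisfy the marginal constraints diag(u) K diag(v) 1 = r and (diag(u) K diag(v))ᵀ 1 = c with K_{ij} = exp(−C_{ij}/ε), then Π = diag(u) K diag(v) is the unique minimizer of the entropy-regularized OT problem over the transportation polytope U(r,c). -/

import Mathlib

/-!
If `Π = diag(u) K diag(v)`, then `C + ε log Π = ε (log u ⊕ log v)`, so for every `Q` the objective
splits as `F(Q) = ε ∑ (log uᵢ + log vⱼ) Qᵢⱼ + ε KL(Q ‖ Π)`. The first term only depends on the
marginals of `Q`, hence is the same for all of `U(r,c)`, and the pointwise Gibbs inequality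
`q log q - q log p ≥ q - p` makes `KL(Q ‖ Π) ≥ ∑ (Q - Π) = 0`, with equality only at `Q = Π`.
-/

open Real Finset

lemma sub_lt_mul_log_sub_mul_log {p q : ℝ} (hp : 0 < p) (hq : 0 ≤ q) (hne : q ≠ p) :
    q - p < q * log q - q * log p := by
  rcases hq.eq_or_lt with rfl | hq
  · simpa using hp
  have hlog : log (p / q) < p / q - 1 :=
    log_lt_sub_one_of_pos (div_pos hp hq) fun h => hne ((div_eq_one_iff_eq hq.ne').mp h).symm
  rw [log_div hp.ne' hq.ne'] at hlog
  have := mul_lt_mul_of_pos_left hlog hq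
  rw [mul_sub, mul_sub, mul_div_cancel₀ p hq.ne', mul_one] at this
  linarith

lemma sub_le_mul_log_sub_mul_log {p q : ℝ} (hp : 0 < p) (hq : 0 ≤ q) :
    q - p ≤ q * log q - q * log p := by
  rcases eq_or_ne q p with rfl | hne
  · simp
  · exact (sub_lt_mul_log_sub_mul_log hp hq hne).le

section Transport

variable {ι κ : Type*} [Fintype ι] [Fintype κ]

lemma sum_sum_sub_lt_sum_sum_mul_log_sub {P Q : Matrix ι κ ℝ}
    (hP : ∀ i j, 0 < P i j) (hQ : ∀ i j, 0 ≤ Q i j) (hne : Q ≠ P) :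
    ∑ i, ∑ j, (Q i j - P i j) < ∑ i, ∑ j, (Q i j * log (Q i j) - Q i j * log (P i j)) := by
  obtain ⟨i₀, j₀, hij⟩ : ∃ i j, Q i j ≠ P i j := by
    by_contra! h
    exact hne (Matrix.ext h)
  have hle : ∀ i j, Q i j - P i j ≤ Q i j * log (Q i j) - Q i j * log (P i j) :=
    fun i j => sub_le_mul_log_sub_mul_log (hP i j) (hQ i j)
  refine sum_lt_sum (fun i _ => sum_le_sum fun j _ => hle i j) ⟨i₀, mem_univ _, ?_⟩
  exact sum_lt_sum (fun j _ => hle i₀ j)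
    ⟨j₀, mem_univ _, sub_lt_mul_log_sub_mul_log (hP i₀ j₀) (hQ i₀ j₀) hij⟩

lemma sum_sum_add_mul_eq_of_marginals (a : ι → ℝ) (b : κ → ℝ) {M : Matrix ι κ ℝ}
    {r : ι → ℝ} {c : κ → ℝ} (hr : ∀ i, ∑ j, M i j = r i) (hc : ∀ j, ∑ i, M i j = c j) :
    ∑ i, ∑ j, (a i + b j) * M i j = ∑ i, a i * r i + ∑ j, b j * c j := by
  simp_rw [add_mul, sum_add_distrib, ← mul_sum, hr]
  rw [sum_comm]
  simp_rw [← mul_sum, hc]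

noncomputable def entropicCost (C : Matrix ι κ ℝ) (ε : ℝ) (Q : Matrix ι κ ℝ) : ℝ :=
  ∑ i, ∑ j, (C i j * Q i j + ε * (Q i j * log (Q i j)))

/-- The hypothesis `hC` is the KKT stationarity condition `C + ε log P = ε (a ⊕ b)`. -/
lemma entropicCost_eq_add_relEntropy {C P : Matrix ι κ ℝ} {ε : ℝ} {a : ι → ℝ} {b : κ → ℝ}
    (hC : ∀ i j, C i j = ε * (a i + b j - log (P i j))) (Q : Matrix ι κ ℝ) :
    entropicCost C ε Q = ε * ∑ i, ∑ j, (a i + b j) * Q i j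
      + ε * ∑ i, ∑ j, (Q i j * log (Q i j) - Q i j * log (P i j)) := by
  simp_rw [entropicCost, mul_sum, ← sum_add_distrib, hC]
  congr 1; ext i; congr 1; ext j; ring

theorem entropicCost_lt_of_stationary {C P Q : Matrix ι κ ℝ} {ε : ℝ} (hε : 0 < ε)
    {a : ι → ℝ} {b : κ → ℝ} (hC : ∀ i j, C i j = ε * (a i + b j - log (P i j)))
    {r : ι → ℝ} {c : κ → ℝ} (hP : ∀ i j, 0 < P i j)
    (hPr : ∀ i, ∑ j, P i j = r i) (hPc : ∀ j, ∑ i, P i j = c j)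
    (hQ : ∀ i j, 0 ≤ Q i j) (hQr : ∀ i, ∑ j, Q i j = r i) (hQc : ∀ j, ∑ i, Q i j = c j)
    (hne : Q ≠ P) :
    entropicCost C ε P < entropicCost C ε Q := by
  have hmass : ∑ i, ∑ j, (Q i j - P i j) = 0 := by
    simp only [sum_sub_distrib, hQr, hPr, sub_self, sum_const_zero]
  have hKL := hmass ▸ sum_sum_sub_lt_sum_sum_mul_log_sub hP hQ hne
  rw [entropicCost_eq_add_relEntropy hC, entropicCost_eq_add_relEntropy hC,
    sum_sum_add_mul_eq_of_marginals a b hPr hPc, sum_sum_add_mul_eq_of_marginals a b hQr hQc]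
  simp only [sub_self, sum_const_zero, mul_zero, add_zero]
  linarith [mul_pos hε hKL]

end Transport

theorem entropic_ot_scaling_is_unique_minimizer_general
    (n m : ℕ) (C : Matrix (Fin n) (Fin m) ℝ) (ε : ℝ) (hε : 0 < ε)
    (r : Fin n → ℝ) (c : Fin m → ℝ)
    (u : Fin n → ℝ) (v : Fin m → ℝ)
    (hu : ∀ i, 0 < u i) (hv : ∀ j, 0 < v j)
    (hrow : ∀ i, ∑ j, u i * Real.exp (-C i j / ε) * v j = r i)
    (hcol : ∀ j, ∑ i, u i * Real.exp (-C i j / ε) * v j = c j) :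
    (∀ i j, 0 ≤ u i * Real.exp (-C i j / ε) * v j) ∧
    (∀ i, ∑ j, u i * Real.exp (-C i j / ε) * v j = r i) ∧
    (∀ j, ∑ i, u i * Real.exp (-C i j / ε) * v j = c j) ∧
    (∀ Q : Matrix (Fin n) (Fin m) ℝ,
      ((∀ i j, 0 ≤ Q i j) ∧ (∀ i, ∑ j, Q i j = r i) ∧ (∀ j, ∑ i, Q i j = c j)) →
      Q ≠ (fun i j => u i * Real.exp (-C i j / ε) * v j) →
      (∑ i, ∑ j, (C i j * (u i * Real.exp (-C i j / ε) * v j)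
          + ε * ((u i * Real.exp (-C i j / ε) * v j)
              * Real.log (u i * Real.exp (-C i j / ε) * v j)))) <
        ∑ i, ∑ j, (C i j * Q i j + ε * (Q i j * Real.log (Q i j)))) := by
  set P : Matrix (Fin n) (Fin m) ℝ := fun i j => u i * exp (-C i j / ε) * v j
  have hP : ∀ i j, 0 < P i j := fun i j => by positivity [hu i, hv j]
  have hC : ∀ i j, C i j = ε * (log (u i) + log (v j) - log (P i j)) := fun i j => by
    simp only [P, log_mul (mul_pos (hu i) (exp_pos _)).ne' (hv j).ne',
      log_mul (hu i).ne' (exp_pos _).ne', log_exp]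
    field_simp
    ring
  refine ⟨fun i j => (hP i j).le, hrow, hcol, ?_⟩
  rintro Q ⟨hQ, hQr, hQc⟩ hne
  exact entropicCost_lt_of_stationary hε hC hP hrow hcol hQ hQr hQc hne

/-- If strictly positive `u, v` satisfy the marginal constraints for
`P i j = u i * exp (-C i j / ε) * v j`, then `P` is the unique minimizer of the
entropy-regularized OT problem over the transportation polytope `U(r,c)`. -/
theorem entropic_ot_scaling_is_unique_minimizer
    (n m : ℕ) (C : Matrix (Fin n) (Fin m) ℝ) (ε : ℝ) (hε : 0 < ε)
    (r : Fin n → ℝ) (c : Fin m → ℝ)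
    (hr : ∀ i, 0 < r i) (hc : ∀ j, 0 < c j)
    (hr1 : ∑ i, r i = 1) (hc1 : ∑ j, c j = 1)
    (u : Fin n → ℝ) (v : Fin m → ℝ)
    (hu : ∀ i, 0 < u i) (hv : ∀ j, 0 < v j)
    (hrow : ∀ i, ∑ j, u i * Real.exp (-C i j / ε) * v j = r i)
    (hcol : ∀ j, ∑ i, u i * Real.exp (-C i j / ε) * v j = c j) :
    (∀ i j, 0 ≤ u i * Real.exp (-C i j / ε) * v j) ∧
    (∀ i, ∑ j, u i * Real.exp (-C i j / ε) * v j = r i) ∧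
    (∀ j, ∑ i, u i * Real.exp (-C i j / ε) * v j = c j) ∧
    (∀ Q : Matrix (Fin n) (Fin m) ℝ,
      ((∀ i j, 0 ≤ Q i j) ∧ (∀ i, ∑ j, Q i j = r i) ∧ (∀ j, ∑ i, Q i j = c j)) →
      Q ≠ (fun i j => u i * Real.exp (-C i j / ε) * v j) →
      (∑ i, ∑ j, (C i j * (u i * Real.exp (-C i j / ε) * v j)
          + ε * ((u i * Real.exp (-C i j / ε) * v j)
              * Real.log (u i * Real.exp (-C i j / ε) * v j)))) <
        ∑ i, ∑ j, (C i j * Q i j + ε * (Q i j * Real.log (Q i j)))) :=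
  entropic_ot_scaling_is_unique_minimizer_general n m C ε hε r c u v hu hv hrow hcol
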